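/- arXiv:1212.4178 — 3 statements merged into one kernel-verified Lean document; each statement's English description precedes it below -/
import Mathlib

section
/- Let m ≥ 1 be a natural number, ϖ_m = 2∫_0^1 (1-t^m)^(-1/2) dt, and let φ : ℝ → ℝ satisfy: x = ∫_0^{φ(x)} (1-t^m)^(-1/2) dt and 0 ≤ φ(x) ≤ 1 for all x ∈ [0, ϖ_m/2], and φ(ϖ_m - x) = φ(x) for all x ∈ [0, ϖ_m]. Define I(n) = ∫_0^{ϖ_m} φ(x)^n dx for integers n ≥ 0. Then for all n ≥ 0, (2(n+1) + m)·I(n+m) = 2(n+1)·I(n); equivalently, I(n+m)/I(n) = 2(n+1)/(2(n+1)+m). -/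
/-!
On `[0, ϖ/2]` the substitution `x = l_m(t)`, under which `φ(l_m(t)) = t` and
`dx = (1 - t^m)^(-1/2) dt`, together with the symmetry `φ(ϖ - x) = φ(x)` on the other half,
turns `I(n)` into the beta-type integral `2 ∫₀¹ tⁿ (1 - t^m)^(-1/2) dt`. For these the
recursion is an integration by parts:
`t^(n+1) (1 - t^m)^(1/2)` vanishes at both ends and its derivative is
`((n+1) tⁿ - (n+1+m/2) t^(n+m)) (1 - t^m)^(-1/2)`.
-/

open MeasureTheory intervalIntegral Set

lemma integral_eq_two_mul_integral_half_of_symm {f : ℝ → ℝ} {a : ℝ} (ha : 0 ≤ a)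
    (hf : IntervalIntegrable f volume 0 (a / 2)) (hsymm : ∀ x ∈ Icc 0 a, f (a - x) = f x) :
    ∫ x in (0:ℝ)..a, f x = 2 * ∫ x in (0:ℝ)..a / 2, f x := by
  have heq : EqOn (fun x => f (a - x)) f (uIcc (a / 2) a) := fun x hx => by
    rw [uIcc_of_le (by linarith)] at hx
    exact hsymm x ⟨by linarith [hx.1], hx.2⟩
  have hf' : IntervalIntegrable f volume (a / 2) a := by
    have h := (hf.comp_sub_left a).symm
    rw [sub_zero, show a - a / 2 = a / 2 by ring] at h
    exact h.congr (heq.mono uIoc_subset_uIcc)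
  rw [← integral_add_adjacent_intervals hf hf', ← integral_congr heq, integral_comp_sub_left,
    sub_self, show a - a / 2 = a / 2 by ring]
  ring

namespace Clover

noncomputable def density (m : ℕ) (t : ℝ) : ℝ := (1 - t ^ m) ^ (-(1/2) : ℝ)

noncomputable def arcLength (m : ℕ) (r : ℝ) : ℝ := ∫ t in (0:ℝ)..r, density m t

noncomputable def moment (m k : ℕ) : ℝ := ∫ t in (0:ℝ)..1, t ^ k * density m t

variable {m : ℕ}

lemma one_sub_pow_pos (hm : 1 ≤ m) {t : ℝ} (h0 : 0 ≤ t) (h1 : t < 1) : 0 < 1 - t ^ m :=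
  sub_pos.mpr (pow_lt_one₀ h0 h1 (by omega))

lemma density_pos (hm : 1 ≤ m) {t : ℝ} (h0 : 0 ≤ t) (h1 : t < 1) : 0 < density m t :=
  Real.rpow_pos_of_pos (one_sub_pow_pos hm h0 h1) _

lemma continuousAt_density (hm : 1 ≤ m) {t : ℝ} (h0 : 0 ≤ t) (h1 : t < 1) :
    ContinuousAt (density m) t :=
  ((continuous_const.sub (continuous_pow m)).continuousAt).rpow_const
    (Or.inl (one_sub_pow_pos hm h0 h1).ne')

lemma density_le_one_sub_rpow (hm : 1 ≤ m) {t : ℝ} (ht : t ∈ Ioo 0 1) :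
    density m t ≤ (1 - t) ^ (-(1/2) : ℝ) :=
  Real.rpow_le_rpow_of_nonpos (sub_pos.mpr ht.2)
    (sub_le_sub_left (by simpa using pow_le_pow_of_le_one ht.1.le ht.2.le hm) 1) (by norm_num)

lemma measurable_density : Measurable (density m) := by
  unfold density
  fun_prop

lemma intervalIntegrable_density (hm : 1 ≤ m) :
    IntervalIntegrable (density m) volume 0 1 := by
  have hdom : IntervalIntegrable (fun t : ℝ => (1 - t) ^ (-(1/2) : ℝ)) volume 0 1 := by
    simpa using ((intervalIntegrable_rpow' (a := 0) (b := 1)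
      (r := -(1/2)) (by norm_num)).comp_sub_left 1).symm
  rw [intervalIntegrable_iff_integrableOn_Ioo_of_le zero_le_one] at hdom ⊢
  refine hdom.mono' measurable_density.aestronglyMeasurable
    (ae_restrict_of_forall_mem measurableSet_Ioo fun t ht => ?_)
  rw [Real.norm_of_nonneg (density_pos hm ht.1.le ht.2).le]
  exact density_le_one_sub_rpow hm ht

lemma intervalIntegrable_pow_mul_density (hm : 1 ≤ m) (k : ℕ) :
    IntervalIntegrable (fun t => t ^ k * density m t) volume 0 1 :=
  (intervalIntegrable_density hm).continuousOn_mul (continuous_pow k).continuousOn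

lemma hasDerivAt_pow_mul_sqrt_one_sub_pow (hm : 1 ≤ m) (n : ℕ) {x : ℝ} (hx : x ∈ Ioo 0 1) :
    HasDerivAt (fun r : ℝ => r ^ (n + 1) * (1 - r ^ m) ^ (1/2 : ℝ))
      ((n + 1) * (x ^ n * density m x) - (n + 1 + m / 2) * (x ^ (n + m) * density m x)) x := by
  have hpos := one_sub_pow_pos hm hx.1.le hx.2
  have hsqrt : (1 - x ^ m) ^ (1/2 : ℝ) = (1 - x ^ m) * density m x := by
    rw [density, ← Real.rpow_one_add' hpos.le (by norm_num)]
    norm_num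
  obtain ⟨j, rfl⟩ := Nat.exists_eq_add_of_le' hm
  have h := (hasDerivAt_pow (n + 1) x).mul
    (((hasDerivAt_pow (j + 1) x).const_sub 1).rpow_const (p := 1/2) (Or.inl hpos.ne'))
  refine h.congr_deriv ?_
  rw [show (1/2 : ℝ) - 1 = -(1/2) by norm_num, ← density, hsqrt]
  push_cast
  ring

lemma moment_recursion (hm : 1 ≤ m) (n : ℕ) :
    (2 * ((n : ℝ) + 1) + m) * moment m (n + m) = 2 * ((n : ℝ) + 1) * moment m n := by
  have hcont : ContinuousOn (fun r : ℝ => r ^ (n + 1) * (1 - r ^ m) ^ (1/2 : ℝ)) (Icc 0 1) :=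
    (Continuous.mul (continuous_pow _)
      ((continuous_const.sub (continuous_pow m)).rpow_const
        fun _ => Or.inr (by norm_num))).continuousOn
  have h1 := (intervalIntegrable_pow_mul_density hm n).const_mul (n + 1 : ℝ)
  have h2 := (intervalIntegrable_pow_mul_density hm (n + m)).const_mul (n + 1 + m / 2 : ℝ)
  have hFTC := integral_eq_sub_of_hasDerivAt_of_le zero_le_one hcont
    (fun x hx => hasDerivAt_pow_mul_sqrt_one_sub_pow hm n hx) (h1.sub h2)
  rw [intervalIntegral.integral_sub h1 h2, intervalIntegral.integral_const_mul,
    intervalIntegral.integral_const_mul] at hFTC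
  simp only [one_pow, sub_self, ne_eq, one_div, inv_eq_zero, OfNat.ofNat_ne_zero,
    not_false_eq_true, Real.zero_rpow, mul_zero, Nat.add_eq_zero_iff, one_ne_zero, and_false,
    zero_pow, zero_mul] at hFTC
  unfold moment
  linear_combination -2 * hFTC

lemma intervalIntegrable_density_of_mem (hm : 1 ≤ m) {a b : ℝ} (ha : a ∈ Icc 0 1)
    (hb : b ∈ Icc 0 1) : IntervalIntegrable (density m) volume a b :=
  (intervalIntegrable_density hm).mono_set <| uIcc_subset_uIcc
    (by rwa [uIcc_of_le zero_le_one]) (by rwa [uIcc_of_le zero_le_one])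

lemma continuousOn_arcLength (hm : 1 ≤ m) : ContinuousOn (arcLength m) (Icc 0 1) := by
  have h := continuousOn_primitive_interval' (intervalIntegrable_density hm) left_mem_uIcc
  rwa [uIcc_of_le zero_le_one] at h

lemma hasDerivAt_arcLength (hm : 1 ≤ m) {x : ℝ} (hx : x ∈ Ioo 0 1) :
    HasDerivAt (arcLength m) (density m x) x :=
  integral_hasDerivAt_right
    (intervalIntegrable_density_of_mem hm (left_mem_Icc.mpr zero_le_one) (Ioo_subset_Icc_self hx))
    measurable_density.stronglyMeasurable.stronglyMeasurableAtFilter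
    (continuousAt_density hm hx.1.le hx.2)

lemma strictMonoOn_arcLength (hm : 1 ≤ m) : StrictMonoOn (arcLength m) (Icc 0 1) :=
  strictMonoOn_of_deriv_pos (convex_Icc 0 1) (continuousOn_arcLength hm) fun x hx => by
    rw [interior_Icc] at hx
    rw [(hasDerivAt_arcLength hm hx).deriv]
    exact density_pos hm hx.1.le hx.2

lemma arcLength_image_Ioo (hm : 1 ≤ m) : arcLength m '' Ioo 0 1 = Ioo 0 (arcLength m 1) := by
  rw [(continuousOn_arcLength hm).image_Ioo_of_strictMonoOn zero_le_one
    (strictMonoOn_arcLength hm), arcLength, integral_same]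

lemma mapsTo_arcLength (hm : 1 ≤ m) : MapsTo (arcLength m) (Icc 0 1) (Icc 0 (arcLength m 1)) := by
  simpa [arcLength] using (strictMonoOn_arcLength hm).monotoneOn.mapsTo_Icc

lemma arcLength_one_nonneg (hm : 1 ≤ m) : 0 ≤ arcLength m 1 :=
  (mapsTo_arcLength hm (right_mem_Icc.mpr zero_le_one)).1

lemma intervalIntegrable_iff_comp_arcLength (hm : 1 ≤ m) (f : ℝ → ℝ) :
    IntervalIntegrable f volume 0 (arcLength m 1) ↔
      IntervalIntegrable (fun t => density m t * f (arcLength m t)) volume 0 1 := by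
  rw [intervalIntegrable_iff_integrableOn_Ioo_of_le (arcLength_one_nonneg hm),
    intervalIntegrable_iff_integrableOn_Ioo_of_le zero_le_one, ← arcLength_image_Ioo hm,
    integrableOn_image_iff_integrableOn_abs_deriv_smul measurableSet_Ioo
      (fun x hx => (hasDerivAt_arcLength hm hx).hasDerivWithinAt)
      ((strictMonoOn_arcLength hm).injOn.mono Ioo_subset_Icc_self)]
  refine integrableOn_congr_fun (fun t ht => ?_) measurableSet_Ioo
  simp [abs_of_pos (density_pos hm ht.1.le ht.2)]

lemma integral_comp_arcLength (hm : 1 ≤ m) (f : ℝ → ℝ) :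
    ∫ x in (0:ℝ)..arcLength m 1, f x =
      ∫ t in (0:ℝ)..1, density m t * f (arcLength m t) := by
  rw [integral_of_le (arcLength_one_nonneg hm), integral_of_le zero_le_one,
    integral_Ioc_eq_integral_Ioo, integral_Ioc_eq_integral_Ioo, ← arcLength_image_Ioo hm,
    integral_image_eq_integral_abs_deriv_smul measurableSet_Ioo
      (fun x hx => (hasDerivAt_arcLength hm hx).hasDerivWithinAt)
      ((strictMonoOn_arcLength hm).injOn.mono Ioo_subset_Icc_self)]
  refine setIntegral_congr_fun measurableSet_Ioo fun t ht => ?_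
  simp [abs_of_pos (density_pos hm ht.1.le ht.2)]

section Inverse

variable {φ : ℝ → ℝ}

lemma eqOn_density_mul_pow_comp_arcLength (hφ : RightInvOn (arcLength m) φ (Icc 0 1))
    (k : ℕ) :
    EqOn (fun t => density m t * φ (arcLength m t) ^ k) (fun t => t ^ k * density m t)
      (uIcc 0 1) := fun t ht => by
  rw [uIcc_of_le zero_le_one] at ht
  simp only [hφ ht, mul_comm]

lemma intervalIntegrable_pow_of_rightInvOn (hm : 1 ≤ m)
    (hφ : RightInvOn (arcLength m) φ (Icc 0 1)) (k : ℕ) :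
    IntervalIntegrable (fun x => φ x ^ k) volume 0 (arcLength m 1) :=
  (intervalIntegrable_iff_comp_arcLength hm _).mpr <|
    (intervalIntegrable_pow_mul_density hm k).congr
      ((eqOn_density_mul_pow_comp_arcLength hφ k).symm.mono uIoc_subset_uIcc)

lemma integral_pow_of_rightInvOn (hm : 1 ≤ m)
    (hφ : RightInvOn (arcLength m) φ (Icc 0 1)) (k : ℕ) :
    ∫ x in (0:ℝ)..arcLength m 1, φ x ^ k = moment m k := by
  rw [integral_comp_arcLength hm]
  exact integral_congr (eqOn_density_mul_pow_comp_arcLength hφ k)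

end Inverse

end Clover

open Clover

/-- **Recursion for the clover integrals.**
Let `m ≥ 1`, `ϖ = 2 ∫_0^1 (1 - t^m)^(-1/2) dt`, `φ` the `m`-clover function, and
`I(n) = ∫_0^ϖ φ(x)^n dx`.  Then `(2(n+1) + m) I(n+m) = 2(n+1) I(n)` for all `n ≥ 0`,
i.e. `I(n+m)/I(n) = 2(n+1)/(2(n+1)+m)`. -/
theorem clover_integral_recursion (m : ℕ) (hm : 1 ≤ m)
    (ϖ : ℝ) (hϖ : ϖ = 2 * ∫ t in (0:ℝ)..1, (1 - t ^ m) ^ (-(1/2) : ℝ))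
    (φ : ℝ → ℝ)
    (hφ : ∀ x ∈ Set.Icc 0 (ϖ / 2),
      x = ∫ t in (0:ℝ)..(φ x), (1 - t ^ m) ^ (-(1/2) : ℝ))
    (hφ01 : ∀ x ∈ Set.Icc 0 (ϖ / 2), φ x ∈ Set.Icc (0:ℝ) 1)
    (hφsymm : ∀ x ∈ Set.Icc 0 ϖ, φ (ϖ - x) = φ x)
    (I : ℕ → ℝ) (hI : ∀ n : ℕ, I n = ∫ x in (0:ℝ)..ϖ, φ x ^ n) :
    ∀ n : ℕ, (2 * ((n : ℝ) + 1) + m) * I (n + m) = 2 * ((n : ℝ) + 1) * I n := by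
  have hL : ϖ / 2 = arcLength m 1 := by
    rw [hϖ, arcLength]
    unfold density
    ring
  rw [hL] at hφ hφ01
  have hinv : RightInvOn (arcLength m) φ (Icc 0 1) :=
    (strictMonoOn_arcLength hm).injOn.rightInvOn_of_leftInvOn (fun x hx => (hφ x hx).symm)
      (mapsTo_arcLength hm) hφ01
  have hϖ_nonneg : 0 ≤ ϖ := by linarith [arcLength_one_nonneg hm]
  have hI_moment : ∀ k, I k = 2 * moment m k := fun k => by
    rw [hI, integral_eq_two_mul_integral_half_of_symm hϖ_nonneg
        (hL ▸ intervalIntegrable_pow_of_rightInvOn hm hinv k)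
        fun x hx => by simp only [hφsymm x hx],
      hL, integral_pow_of_rightInvOn hm hinv]
  intro n
  rw [hI_moment, hI_moment]
  linear_combination 2 * moment_recursion hm n
end

section
/- Let m ≥ 1 be a natural number, ϖ_m = 2∫_0^1 (1-t^m)^(-1/2) dt, and let φ : ℝ → ℝ satisfy: x = ∫_0^{φ(x)} (1-t^m)^(-1/2) dt and 0 ≤ φ(x) ≤ 1 for all x ∈ [0, ϖ_m/2], and φ(ϖ_m - x) = φ(x) for all x ∈ [0, ϖ_m]. Then ∫_0^{ϖ_m} φ(x)^(m-1) dx = 4/m. -/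
/-!
The substitution `x = l_m(r)`, with `l_m` the arc length, turns `∫_0^{ϖ/2} φ^(m-1)` into
`∫_0^1 r^(m-1) (1 - r^m)^(-1/2) dr = [-(2/m) √(1 - r^m)]_0^1 = 2/m`, and the symmetry
`φ(ϖ - x) = φ(x)` doubles this. Since `l_m` is only differentiable on `[0, 1)`, the
substitution is made on `(0, 1)`; the improper integrals converge because
`(1 - t^m)^(-1/2) ≤ (1 - t)^(-1/2)` on `[0, 1]`.
-/

open Set MeasureTheory intervalIntegral Real

theorem integral_eq_two_nsmul_integral_half_of_symm {E : Type*} [NormedAddCommGroup E]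
    [NormedSpace ℝ E] {g : ℝ → E} {c : ℝ} (hc : 0 ≤ c)
    (hg : ∀ x ∈ Icc 0 c, g (c - x) = g x) (hint : IntervalIntegrable g volume 0 (c / 2)) :
    ∫ x in 0..c, g x = 2 • ∫ x in 0..c / 2, g x := by
  have hreflect : EqOn (fun x => g (c - x)) g (uIcc (c / 2) c) := by
    intro x hx
    rw [uIcc_of_le (by linarith)] at hx
    exact hg x ⟨by linarith [hx.1], hx.2⟩
  have hint' : IntervalIntegrable g volume (c / 2) c := by
    have := (hint.comp_sub_left c).symm
    rw [sub_zero, sub_half] at this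
    exact this.congr (hreflect.mono uIoc_subset_uIcc)
  have hsecond : ∫ x in c / 2..c, g x = ∫ x in 0..c / 2, g x := by
    rw [← integral_congr hreflect, integral_comp_sub_left g c, sub_self, sub_half]
  rw [← integral_add_adjacent_intervals hint hint', hsecond, two_nsmul]

noncomputable def cloverArcLength (m : ℕ) (r : ℝ) : ℝ :=
  ∫ t in (0:ℝ)..r, (1 - t ^ m) ^ (-(1/2) : ℝ)

section Clover

variable {m : ℕ}

theorem one_sub_pow_pos (hm : 0 < m) {t : ℝ} (ht : t ∈ Ico 0 1) : 0 < 1 - t ^ m :=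
  sub_pos.2 (pow_lt_one₀ ht.1 ht.2 hm.ne')

theorem one_sub_pow_rpow_neg_half_le (hm : 0 < m) {t : ℝ} (ht : t ∈ Icc 0 1) :
    (1 - t ^ m) ^ (-(1/2) : ℝ) ≤ (1 - t) ^ (-(1/2) : ℝ) := by
  rcases ht.2.eq_or_lt with rfl | ht1
  · simp -- both sides are `0 ^ (-1/2) = 0`
  · refine rpow_le_rpow_of_nonpos (by linarith) ?_ (by norm_num)
    linarith [pow_le_of_le_one ht.1 ht.2 hm.ne']

theorem intervalIntegrable_one_sub_pow_rpow_neg_half (hm : 0 < m) {a b : ℝ} (ha : a ∈ Icc 0 1)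
    (hb : b ∈ Icc 0 1) :
    IntervalIntegrable (fun t : ℝ => (1 - t ^ m) ^ (-(1/2) : ℝ)) volume a b := by
  have hdom : IntervalIntegrable (fun t : ℝ => (1 - t) ^ (-(1/2) : ℝ)) volume 0 1 := by
    simpa using
      (intervalIntegrable_rpow' (a := 1) (b := 0) (r := -(1/2)) (by norm_num)).comp_sub_left 1
  refine (hdom.mono_fun (Measurable.aestronglyMeasurable (by fun_prop)) ?_).mono_set
    (by rw [uIcc_of_le zero_le_one]; exact uIcc_subset_Icc ha hb)
  filter_upwards [ae_restrict_mem measurableSet_uIoc] with t ht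
  rw [uIoc_of_le zero_le_one] at ht
  have ht' : t ∈ Icc (0:ℝ) 1 := Ioc_subset_Icc_self ht
  rw [norm_of_nonneg (rpow_nonneg (by linarith [pow_le_one₀ ht'.1 ht'.2 (n := m)]) _),
    norm_of_nonneg (rpow_nonneg (by linarith [ht'.2]) _)]
  exact one_sub_pow_rpow_neg_half_le hm ht'

theorem cloverArcLength_strictMonoOn (hm : 0 < m) : StrictMonoOn (cloverArcLength m) (Icc 0 1) := by
  intro a ha b hb hab
  have h0 : (0:ℝ) ∈ Icc 0 1 := left_mem_Icc.2 zero_le_one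
  have hpos : 0 < ∫ t in a..b, (1 - t ^ m) ^ (-(1/2) : ℝ) :=
    intervalIntegral_pos_of_pos_on (intervalIntegrable_one_sub_pow_rpow_neg_half hm ha hb)
      (fun t ht => rpow_pos_of_pos
        (one_sub_pow_pos hm ⟨ha.1.trans ht.1.le, ht.2.trans_le hb.2⟩) _) hab
  have hadd := integral_add_adjacent_intervals
    (intervalIntegrable_one_sub_pow_rpow_neg_half hm h0 ha)
    (intervalIntegrable_one_sub_pow_rpow_neg_half hm ha hb)
  unfold cloverArcLength
  linarith

theorem cloverArcLength_zero : cloverArcLength m 0 = 0 := integral_same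

theorem cloverArcLength_one_pos (hm : 0 < m) : 0 < cloverArcLength m 1 :=
  cloverArcLength_zero (m := m) ▸
    cloverArcLength_strictMonoOn hm (left_mem_Icc.2 zero_le_one) (right_mem_Icc.2 zero_le_one)
      one_pos

theorem image_cloverArcLength_Ioo (hm : 0 < m) :
    cloverArcLength m '' Ioo 0 1 = Ioo 0 (cloverArcLength m 1) := by
  have hcont : ContinuousOn (cloverArcLength m) (Icc 0 1) := by
    have := continuousOn_primitive_interval'
      (intervalIntegrable_one_sub_pow_rpow_neg_half hm (left_mem_Icc.2 zero_le_one)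
        (right_mem_Icc.2 zero_le_one)) left_mem_uIcc
    rwa [uIcc_of_le zero_le_one] at this
  rw [hcont.image_Ioo_of_strictMonoOn zero_le_one (cloverArcLength_strictMonoOn hm),
    cloverArcLength_zero]

theorem hasDerivAt_cloverArcLength (hm : 0 < m) {r : ℝ} (hr : r ∈ Ioo 0 1) :
    HasDerivAt (cloverArcLength m) ((1 - r ^ m) ^ (-(1/2) : ℝ)) r := by
  exact integral_hasDerivAt_right
    (intervalIntegrable_one_sub_pow_rpow_neg_half hm (left_mem_Icc.2 zero_le_one)
      (Ioo_subset_Icc_self hr))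
    (Measurable.aestronglyMeasurable (by fun_prop)).stronglyMeasurableAtFilter
    ((continuousAt_const.sub (continuousAt_id.pow m)).rpow_const
      (Or.inl (one_sub_pow_pos hm (Ioo_subset_Ico_self hr)).ne'))

theorem hasDerivAt_one_sub_pow_rpow_half (hm : 0 < m) {r : ℝ} (hr : 1 - r ^ m ≠ 0) :
    HasDerivAt (fun r : ℝ => -(2 / m) * (1 - r ^ m) ^ (1/2 : ℝ))
      (r ^ (m - 1) * (1 - r ^ m) ^ (-(1/2) : ℝ)) r := by
  refine ((((hasDerivAt_pow m r).const_sub 1).rpow_const (Or.inl hr)).const_mul _).congr_deriv ?_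
  rw [show (1/2 : ℝ) - 1 = -(1/2) by norm_num]
  field_simp

theorem integral_pow_mul_one_sub_pow_rpow_neg_half (hm : 0 < m) :
    IntegrableOn (fun r : ℝ => r ^ (m - 1) * (1 - r ^ m) ^ (-(1/2) : ℝ)) (Ioo (0:ℝ) 1) ∧
      ∫ r in Ioo (0:ℝ) 1, r ^ (m - 1) * (1 - r ^ m) ^ (-(1/2) : ℝ) = 2 / m := by
  have hpos : ∀ r ∈ Ioo (0:ℝ) 1, 0 < 1 - r ^ m :=
    fun r hr => one_sub_pow_pos hm (Ioo_subset_Ico_self hr)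
  have hcont : ContinuousOn (fun r : ℝ => -(2 / m) * (1 - r ^ m) ^ (1/2 : ℝ)) (Icc 0 1) :=
    (continuous_const.mul ((continuous_const.sub (continuous_pow m)).rpow_const
      (fun _ => Or.inr (by norm_num)))).continuousOn
  have hderiv : ∀ r ∈ Ioo (0:ℝ) 1,
      HasDerivAt (fun r : ℝ => -(2 / m) * (1 - r ^ m) ^ (1/2 : ℝ))
        (r ^ (m - 1) * (1 - r ^ m) ^ (-(1/2) : ℝ)) r :=
    fun r hr => hasDerivAt_one_sub_pow_rpow_half hm (hpos r hr).ne'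
  have hint := integrableOn_deriv_of_nonneg hcont hderiv fun r hr =>
    mul_nonneg (pow_nonneg hr.1.le _) (rpow_nonneg (hpos r hr).le _)
  refine ⟨hint.mono_set Ioo_subset_Ioc_self, ?_⟩
  rw [← integral_Ioc_eq_integral_Ioo, ← integral_of_le zero_le_one,
    integral_eq_sub_of_hasDerivAt_of_le zero_le_one hcont hderiv
      ((intervalIntegrable_iff_integrableOn_Ioc_of_le zero_le_one).2 hint)]
  simp [hm.ne']

theorem integral_pow_sub_one_of_leftInvOn_cloverArcLength (hm : 0 < m) {φ : ℝ → ℝ}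
    (hφ : LeftInvOn (cloverArcLength m) φ (Icc 0 (cloverArcLength m 1)))
    (hmaps : MapsTo φ (Icc 0 (cloverArcLength m 1)) (Icc 0 1)) :
    IntervalIntegrable (fun x => φ x ^ (m - 1)) volume 0 (cloverArcLength m 1) ∧
      ∫ x in 0..cloverArcLength m 1, φ x ^ (m - 1) = 2 / m := by
  set l := cloverArcLength m
  have hmono := cloverArcLength_strictMonoOn hm
  have hl1 : 0 ≤ l 1 := (cloverArcLength_one_pos hm).le
  have hφl : ∀ r ∈ Ioo (0:ℝ) 1, φ (l r) = r := by
    intro r hr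
    have hlr : l r ∈ Icc 0 (l 1) := Ioo_subset_Icc_self
      (image_cloverArcLength_Ioo hm ▸ mem_image_of_mem l hr)
    exact hmono.injOn (hmaps hlr) (Ioo_subset_Icc_self hr) (hφ hlr)
  have hderiv : ∀ r ∈ Ioo (0:ℝ) 1,
      HasDerivWithinAt l ((1 - r ^ m) ^ (-(1/2) : ℝ)) (Ioo 0 1) r :=
    fun r hr => (hasDerivAt_cloverArcLength hm hr).hasDerivWithinAt
  have hinj : InjOn l (Ioo 0 1) := hmono.injOn.mono Ioo_subset_Icc_self
  have hsubst : EqOn (fun r => |(1 - r ^ m) ^ (-(1/2) : ℝ)| • φ (l r) ^ (m - 1))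
      (fun r => r ^ (m - 1) * (1 - r ^ m) ^ (-(1/2) : ℝ)) (Ioo 0 1) := by
    intro r hr
    simp only [smul_eq_mul, hφl r hr]
    rw [abs_of_nonneg (rpow_nonneg (one_sub_pow_pos hm (Ioo_subset_Ico_self hr)).le _), mul_comm]
  obtain ⟨hint, hval⟩ := integral_pow_mul_one_sub_pow_rpow_neg_half hm
  constructor
  · rw [intervalIntegrable_iff_integrableOn_Ioo_of_le hl1, ← image_cloverArcLength_Ioo hm,
      integrableOn_image_iff_integrableOn_abs_deriv_smul measurableSet_Ioo hderiv hinj]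
    exact hint.congr_fun hsubst.symm measurableSet_Ioo
  · rw [integral_of_le hl1, integral_Ioc_eq_integral_Ioo, ← image_cloverArcLength_Ioo hm,
      integral_image_eq_integral_abs_deriv_smul measurableSet_Ioo hderiv hinj,
      setIntegral_congr_fun measurableSet_Ioo hsubst, hval]

end Clover

/-- **Initial value `I_m(m-1) = 4/m`.**
Let `m ≥ 1`, `ϖ = 2 ∫_0^1 (1 - t^m)^(-1/2) dt`, and `φ` the `m`-clover function.
Then `∫_0^ϖ φ(x)^(m-1) dx = 4/m`. -/
theorem clover_integral_m_sub_one (m : ℕ) (hm : 1 ≤ m)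
    (ϖ : ℝ) (hϖ : ϖ = 2 * ∫ t in (0:ℝ)..1, (1 - t ^ m) ^ (-(1/2) : ℝ))
    (φ : ℝ → ℝ)
    (hφ : ∀ x ∈ Set.Icc 0 (ϖ / 2),
      x = ∫ t in (0:ℝ)..(φ x), (1 - t ^ m) ^ (-(1/2) : ℝ))
    (hφ01 : ∀ x ∈ Set.Icc 0 (ϖ / 2), φ x ∈ Set.Icc (0:ℝ) 1)
    (hφsymm : ∀ x ∈ Set.Icc 0 ϖ, φ (ϖ - x) = φ x) :
    ∫ x in (0:ℝ)..ϖ, φ x ^ (m - 1) = 4 / m := by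
  have hhalf : ϖ / 2 = cloverArcLength m 1 := by rw [hϖ, cloverArcLength]; ring
  obtain ⟨hint, hval⟩ := integral_pow_sub_one_of_leftInvOn_cloverArcLength hm
    (fun x hx => (hφ x (hhalf ▸ hx)).symm) (fun x hx => hφ01 x (hhalf ▸ hx))
  rw [← hhalf] at hint hval
  have hϖ0 : 0 ≤ ϖ := by linarith [cloverArcLength_one_pos hm]
  rw [integral_eq_two_nsmul_integral_half_of_symm hϖ0 (fun x hx => by rw [hφsymm x hx]) hint,
    hval, nsmul_eq_mul]
  ring
end

section
/- Let m ≥ 1 be a natural number, ϖ_m = 2∫_0^1 (1-t^m)^(-1/2) dt, and let φ : ℝ → ℝ satisfy: x = ∫_0^{φ(x)} (1-t^m)^(-1/2) dt and 0 ≤ φ(x) ≤ 1 for all x ∈ [0, ϖ_m/2], and φ(ϖ_m - x) = φ(x) for all x ∈ [0, ϖ_m]. Then φ(0) = 0, φ(ϖ_m/2) = 1, φ(ϖ_m) = 0, and φ is differentiable at each point of the open interval (0, ϖ_m) with derivative φ'(x) = √(1 - φ(x)^m) for x ∈ (0, ϖ_m/2) and φ'(x) = -√(1 - φ(x)^m)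 for x ∈ (ϖ_m/2, ϖ_m). -/
/-!
On `[0, ϖ/2]` the clover function is the inverse of the arc length
`l(r) = ∫₀ʳ (1 - t^m)^(-1/2) dt`, which is strictly increasing on `[0, 1]` (the singularity at
`t = 1` is dominated by `(1 - t)^(-1/2)`, so `l(1) = ϖ/2` is finite). Hence `φ` is continuous
there, and the inverse function rule gives `φ' = 1 / l'(φ) = √(1 - φ^m)` on `(0, ϖ/2)`. The
symmetry `φ(ϖ - x) = φ(x)` transports this to `(ϖ/2, ϖ)` with a sign change. At `ϖ/2` the
one-sided derivatives are the limits of `±√(1 - φ^m)`, which vanish because `φ(ϖ/2) = 1`.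
-/

open Set Filter Topology MeasureTheory intervalIntegral

section InverseOfStrictMono

variable {α β : Type*} [LinearOrder α]

theorem MonotoneOn.strictMonoOn_of_rightInvOn [Preorder β] {L : α → β} {φ : β → α} {s : Set α}
    {t : Set β} (hL : MonotoneOn L s) (hinv : RightInvOn φ L t) (hmaps : MapsTo φ t s) :
    StrictMonoOn φ t := by
  intro x hx y hy hxy
  by_contra! h
  have := hL (hmaps hy) (hmaps hx) h
  rw [hinv hx, hinv hy] at this
  exact hxy.not_ge this

theorem StrictMonoOn.continuousOn_of_image_Icc [TopologicalSpace α] [OrderTopology α]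
    [LinearOrder β] [TopologicalSpace β] [OrderTopology β] {φ : β → α} {a b : α} {c d : β}
    (hφ : StrictMonoOn φ (Icc c d)) (himg : φ '' Icc c d = Icc a b) :
    ContinuousOn φ (Icc c d) := by
  have : OrdConnected (φ '' Icc c d) := himg ▸ ordConnected_Icc
  rw [continuousOn_iff_continuous_domRestrict]
  exact continuous_subtype_val.comp (hφ.orderIso φ _).continuous

end InverseOfStrictMono

noncomputable def cloverArc (m : ℕ) (r : ℝ) : ℝ := ∫ t in (0:ℝ)..r, (1 - t ^ m) ^ (-(1/2) : ℝ)

section CloverArc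

variable {m : ℕ}

theorem one_sub_pow_pos_of_abs_lt (hm : m ≠ 0) {t : ℝ} (ht : |t| < 1) : 0 < 1 - t ^ m := by
  have : |t ^ m| < 1 := by simpa [abs_pow] using pow_lt_one₀ (abs_nonneg t) ht hm
  linarith [le_abs_self (t ^ m)]

theorem continuousOn_cloverIntegrand (hm : m ≠ 0) :
    ContinuousOn (fun t : ℝ => (1 - t ^ m) ^ (-(1/2) : ℝ)) (Ioo (-1) 1) :=
  (continuousOn_const.sub (continuousOn_pow m)).rpow_const fun _ ht =>
    Or.inl (one_sub_pow_pos_of_abs_lt hm (abs_lt.2 ht)).ne'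

theorem intervalIntegrable_cloverIntegrand (hm : m ≠ 0) :
    IntervalIntegrable (fun t : ℝ => (1 - t ^ m) ^ (-(1/2) : ℝ)) volume 0 1 := by
  have hdom : IntervalIntegrable (fun t : ℝ => (1 - t) ^ (-(1/2) : ℝ)) volume 0 1 := by
    simpa using ((intervalIntegrable_rpow' (a := 0) (b := 1) (by norm_num)).comp_sub_left 1).symm
  refine hdom.mono_fun
    ((measurable_const.sub (measurable_id.pow_const m)).pow_const _).aestronglyMeasurable ?_
  rw [uIoc_of_le zero_le_one]
  filter_upwards [ae_restrict_mem measurableSet_Ioc] with t ⟨ht0, ht1⟩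
  rcases ht1.eq_or_lt with rfl | ht1
  · simp
  have hle : 1 - t ≤ 1 - t ^ m := by
    linarith [pow_le_of_le_one ht0.le ht1.le hm]
  rw [Real.norm_of_nonneg (Real.rpow_nonneg (by linarith) _),
    Real.norm_of_nonneg (Real.rpow_nonneg (by linarith) _)]
  exact Real.rpow_le_rpow_of_nonpos (by linarith) hle (by norm_num)

theorem cloverArc_zero : cloverArc m 0 = 0 := integral_same

theorem cloverArc_strictMonoOn (hm : m ≠ 0) : StrictMonoOn (cloverArc m) (Icc 0 1) := by
  intro a ⟨ha0, _⟩ b ⟨_, hb1⟩ hab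
  have hint : ∀ c ∈ Icc (0:ℝ) 1,
      IntervalIntegrable (fun t : ℝ => (1 - t ^ m) ^ (-(1/2) : ℝ)) volume 0 c := fun c hc =>
    (intervalIntegrable_cloverIntegrand hm).mono_set (by
      rw [uIcc_of_le zero_le_one, uIcc_of_le hc.1]; exact Icc_subset_Icc_right hc.2)
  have hpos : 0 < ∫ t in a..b, (1 - t ^ m) ^ (-(1/2) : ℝ) := by
    refine intervalIntegral_pos_of_pos_on ?_ (fun t ht => ?_) hab
    · exact (hint a ⟨ha0, by linarith⟩).symm.trans (hint b ⟨by linarith, hb1⟩)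
    · exact Real.rpow_pos_of_pos
        (one_sub_pow_pos_of_abs_lt hm (abs_lt.2 ⟨by linarith [ht.1], by linarith [ht.2]⟩)) _
  rw [← integral_interval_sub_left (hint b ⟨by linarith, hb1⟩) (hint a ⟨ha0, by linarith⟩)]
    at hpos
  unfold cloverArc
  linarith

theorem hasDerivAt_cloverArc (hm : m ≠ 0) {r : ℝ} (hr : r ∈ Ioo (-1) 1) :
    HasDerivAt (cloverArc m) ((1 - r ^ m) ^ (-(1/2) : ℝ)) r := by
  have hcont := continuousOn_cloverIntegrand hm
  have hint : IntervalIntegrable (fun t : ℝ => (1 - t ^ m) ^ (-(1/2) : ℝ)) volume 0 r :=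
    (hcont.mono (ordConnected_Ioo.uIcc_subset ⟨by norm_num, by norm_num⟩ hr)).intervalIntegrable
  exact integral_hasDerivAt_right hint
    (hcont.stronglyMeasurableAtFilter isOpen_Ioo r hr) (hcont.continuousAt (Ioo_mem_nhds hr.1 hr.2))

theorem cloverArc_one_pos (hm : m ≠ 0) : 0 < cloverArc m 1 :=
  cloverArc_zero (m := m) ▸
    cloverArc_strictMonoOn hm (left_mem_Icc.2 zero_le_one) (right_mem_Icc.2 zero_le_one) one_pos

theorem cloverArc_mapsTo (hm : m ≠ 0) : MapsTo (cloverArc m) (Icc 0 1) (Icc 0 (cloverArc m 1)) :=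
  fun _ hr => cloverArc_zero (m := m) ▸
    ⟨(cloverArc_strictMonoOn hm).monotoneOn (left_mem_Icc.2 zero_le_one) hr hr.1,
      (cloverArc_strictMonoOn hm).monotoneOn hr (right_mem_Icc.2 zero_le_one) hr.2⟩

end CloverArc

section InverseOfCloverArc

variable {m : ℕ} {φ : ℝ → ℝ}

theorem leftInvOn_of_rightInvOn_cloverArc (hm : m ≠ 0)
    (hinv : RightInvOn φ (cloverArc m) (Icc 0 (cloverArc m 1)))
    (hmaps : MapsTo φ (Icc 0 (cloverArc m 1)) (Icc 0 1)) :
    LeftInvOn φ (cloverArc m) (Icc 0 1) :=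
  (cloverArc_strictMonoOn hm).injOn.rightInvOn_of_leftInvOn hinv (cloverArc_mapsTo hm) hmaps

theorem continuousOn_of_rightInvOn_cloverArc (hm : m ≠ 0)
    (hinv : RightInvOn φ (cloverArc m) (Icc 0 (cloverArc m 1)))
    (hmaps : MapsTo φ (Icc 0 (cloverArc m 1)) (Icc 0 1)) :
    ContinuousOn φ (Icc 0 (cloverArc m 1)) := by
  have hbij : BijOn φ (Icc 0 (cloverArc m 1)) (Icc 0 1) :=
    InvOn.bijOn ⟨hinv, leftInvOn_of_rightInvOn_cloverArc hm hinv hmaps⟩ hmaps (cloverArc_mapsTo hm)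
  exact ((cloverArc_strictMonoOn hm).monotoneOn.strictMonoOn_of_rightInvOn hinv hmaps)
    |>.continuousOn_of_image_Icc hbij.image_eq

theorem hasDerivAt_of_rightInvOn_cloverArc (hm : m ≠ 0)
    (hinv : RightInvOn φ (cloverArc m) (Icc 0 (cloverArc m 1)))
    (hmaps : MapsTo φ (Icc 0 (cloverArc m 1)) (Icc 0 1)) {x : ℝ} (hx : x ∈ Ioo 0 (cloverArc m 1)) :
    HasDerivAt φ (√(1 - φ x ^ m)) x := by
  have hxc : x ∈ Icc 0 (cloverArc m 1) := Ioo_subset_Icc_self hx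
  have hφx : φ x < 1 := (hmaps hxc).2.lt_of_ne fun h => hx.2.ne (h ▸ hinv hxc).symm
  have hpos : 0 < 1 - φ x ^ m :=
    one_sub_pow_pos_of_abs_lt hm (abs_lt.2 ⟨by linarith [(hmaps hxc).1], hφx⟩)
  have h := HasDerivAt.of_local_left_inverse
    ((continuousOn_of_rightInvOn_cloverArc hm hinv hmaps).continuousAt (Icc_mem_nhds hx.1 hx.2))
    (hasDerivAt_cloverArc hm ⟨by linarith [(hmaps hxc).1], hφx⟩) (Real.rpow_pos_of_pos hpos _).ne'
    (eventually_of_mem (Icc_mem_nhds hx.1 hx.2) fun y hy => hinv hy)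
  rwa [Real.rpow_neg hpos.le, inv_inv, ← Real.sqrt_eq_rpow] at h

theorem hasDerivWithinAt_Iic_of_rightInvOn_cloverArc (hm : m ≠ 0)
    (hinv : RightInvOn φ (cloverArc m) (Icc 0 (cloverArc m 1)))
    (hmaps : MapsTo φ (Icc 0 (cloverArc m 1)) (Icc 0 1)) :
    HasDerivWithinAt φ 0 (Iic (cloverArc m 1)) (cloverArc m 1) := by
  have hc := cloverArc_one_pos hm
  have hφc : φ (cloverArc m 1) = 1 :=
    leftInvOn_of_rightInvOn_cloverArc hm hinv hmaps (right_mem_Icc.2 zero_le_one)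
  have hcont : ContinuousWithinAt φ (Icc 0 (cloverArc m 1)) (cloverArc m 1) :=
    continuousOn_of_rightInvOn_cloverArc hm hinv hmaps _ (right_mem_Icc.2 hc.le)
  have hderiv {x : ℝ} (hx : x ∈ Ioo 0 (cloverArc m 1)) :=
    hasDerivAt_of_rightInvOn_cloverArc hm hinv hmaps hx
  refine hasDerivWithinAt_Iic_of_tendsto_deriv
    (fun x hx => (hderiv hx).differentiableAt.differentiableWithinAt)
    (hcont.mono Ioo_subset_Icc_self) (Ioo_mem_nhdsLT hc) ?_
  have hlim : Tendsto (fun x => √(1 - φ x ^ m)) (𝓝[<] cloverArc m 1) (𝓝 0) := by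
    simpa [hφc] using ((hcont.pow m).const_sub 1).sqrt.mono_left
      (nhdsWithin_le_of_mem (Icc_mem_nhdsLT hc))
  exact hlim.congr' (eventually_of_mem (Ioo_mem_nhdsLT hc) fun x hx => (hderiv hx).deriv.symm)

end InverseOfCloverArc

section Reflection

variable {𝕜 F : Type*} [NontriviallyNormedField 𝕜] [NormedAddCommGroup F] [NormedSpace 𝕜 F]
  {f : 𝕜 → F} {f' : F} {p x : 𝕜}

theorem HasDerivWithinAt.of_eventuallyEq_comp_const_sub {s : Set 𝕜}
    (hf : HasDerivWithinAt f f' s (p - x)) (hsymm : (fun y => f (p - y)) =ᶠ[𝓝 x] f) :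
    HasDerivWithinAt f (-f') ((p - ·) ⁻¹' s) x := by
  have h := hf.scomp x ((hasDerivAt_id x).const_sub p).hasDerivWithinAt (mapsTo_preimage _ s)
  simpa using
    h.congr_of_eventuallyEq (hsymm.symm.filter_mono nhdsWithin_le_nhds) hsymm.eq_of_nhds.symm

end Reflection

theorem HasDerivWithinAt.hasDerivAt_of_eventuallyEq_comp_const_sub {F : Type*}
    [NormedAddCommGroup F] [NormedSpace ℝ F] {f : ℝ → F} {p : ℝ}
    (hf : HasDerivWithinAt f 0 (Iic (p / 2)) (p / 2))
    (hsymm : (fun y => f (p - y)) =ᶠ[𝓝 (p / 2)] f) : HasDerivAt f 0 (p / 2) := by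
  have hright : HasDerivWithinAt f 0 (Ici (p / 2)) (p / 2) := by
    have hf' : HasDerivWithinAt f 0 (Iic (p / 2)) (p - p / 2) := by rwa [sub_half]
    have h := hf'.of_eventuallyEq_comp_const_sub hsymm
    rw [neg_zero] at h
    exact h.mono fun y (hy : p / 2 ≤ y) => show p - y ≤ p / 2 by linarith
  simpa using hf.union hright

/-- **Boundary values and derivative of the clover function.**
Let `m ≥ 1`, `ϖ = 2 ∫_0^1 (1 - t^m)^(-1/2) dt`, and `φ` the `m`-clover function.
Then `φ(0) = 0`, `φ(ϖ/2) = 1`, `φ(ϖ) = 0`, and `φ` is differentiable on `(0, ϖ)` with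
`φ'(x) = √(1 - φ(x)^m)` on `(0, ϖ/2)` and `φ'(x) = -√(1 - φ(x)^m)` on `(ϖ/2, ϖ)`. -/
theorem clover_function_values_and_deriv (m : ℕ) (hm : 1 ≤ m)
    (ϖ : ℝ) (hϖ : ϖ = 2 * ∫ t in (0:ℝ)..1, (1 - t ^ m) ^ (-(1/2) : ℝ))
    (φ : ℝ → ℝ)
    (hφ : ∀ x ∈ Set.Icc 0 (ϖ / 2),
      x = ∫ t in (0:ℝ)..(φ x), (1 - t ^ m) ^ (-(1/2) : ℝ))
    (hφ01 : ∀ x ∈ Set.Icc 0 (ϖ / 2), φ x ∈ Set.Icc (0:ℝ) 1)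
    (hφsymm : ∀ x ∈ Set.Icc 0 ϖ, φ (ϖ - x) = φ x) :
    φ 0 = 0 ∧ φ (ϖ / 2) = 1 ∧ φ ϖ = 0 ∧
      (∀ x ∈ Set.Ioo 0 ϖ, DifferentiableAt ℝ φ x) ∧
      (∀ x ∈ Set.Ioo 0 (ϖ / 2), deriv φ x = Real.sqrt (1 - φ x ^ m)) ∧
      (∀ x ∈ Set.Ioo (ϖ / 2) ϖ, deriv φ x = -Real.sqrt (1 - φ x ^ m)) := by
  have hm0 : m ≠ 0 := by omega
  have hc : ϖ / 2 = cloverArc m 1 := by rw [hϖ, cloverArc]; ring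
  have hinv : RightInvOn φ (cloverArc m) (Icc 0 (cloverArc m 1)) :=
    fun x hx => (hφ x (hc ▸ hx)).symm
  have hmaps : MapsTo φ (Icc 0 (cloverArc m 1)) (Icc 0 1) := fun x hx => hφ01 x (hc ▸ hx)
  have hleftInv := leftInvOn_of_rightInvOn_cloverArc hm0 hinv hmaps
  have hϖ : 0 < ϖ := by linarith [cloverArc_one_pos hm0]
  have hφ0 : φ 0 = 0 := by simpa [cloverArc_zero] using hleftInv (left_mem_Icc.2 zero_le_one)
  have hφϖ : φ ϖ = 0 := by simpa [hφ0] using (hφsymm ϖ ⟨hϖ.le, le_rfl⟩).symm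
  have hsymm {x : ℝ} (hx : x ∈ Ioo 0 ϖ) : (fun y => φ (ϖ - y)) =ᶠ[𝓝 x] φ :=
    eventually_of_mem (Icc_mem_nhds hx.1 hx.2) hφsymm
  have hderiv₁ {x : ℝ} (hx : x ∈ Ioo 0 (ϖ / 2)) : HasDerivAt φ (√(1 - φ x ^ m)) x :=
    hasDerivAt_of_rightInvOn_cloverArc hm0 hinv hmaps (hc ▸ hx)
  have hderiv₂ {x : ℝ} (hx : x ∈ Ioo (ϖ / 2) ϖ) : HasDerivAt φ (-√(1 - φ x ^ m)) x := by
    have h := (hderiv₁ ⟨by linarith [hx.2], by linarith [hx.1]⟩).comp_const_sub ϖ x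
    rw [hφsymm x ⟨by linarith [hx.1], hx.2.le⟩] at h
    exact h.congr_of_eventuallyEq (hsymm ⟨by linarith [hx.1], hx.2⟩).symm
  have hmid : HasDerivAt φ 0 (ϖ / 2) := by
    have hderivLeft := hasDerivWithinAt_Iic_of_rightInvOn_cloverArc hm0 hinv hmaps
    rw [← hc] at hderivLeft
    exact hderivLeft.hasDerivAt_of_eventuallyEq_comp_const_sub (hsymm ⟨by linarith, by linarith⟩)
  refine ⟨hφ0, hc ▸ hleftInv (right_mem_Icc.2 zero_le_one), hφϖ, fun x hx => ?_,
    fun x hx => (hderiv₁ hx).deriv, fun x hx => (hderiv₂ hx).deriv⟩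
  rcases lt_trichotomy x (ϖ / 2) with h | rfl | h
  · exact (hderiv₁ ⟨hx.1, h⟩).differentiableAt
  · exact hmid.differentiableAt
  · exact (hderiv₂ ⟨h, hx.2⟩).differentiableAt
end
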